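/- arXiv:quant-ph/0406139 — 2 statements merged into one kernel-verified Lean document; each statement's English description precedes it below -/
import Mathlib

section
/- The matrix R^{(2)} = (1/4)·I − (1/8)·(V₂ ⊗ I_{ℂ²}) − (1/8)·(I_{ℂ²} ⊗ V₂)(V₂ ⊗ I_{ℂ²})(I_{ℂ²} ⊗ V₂) on ℂ²⊗ℂ²⊗ℂ² is positive semidefinite and its partial traces over the second and over the third tensor factor both equal the Werner state ρ_W^{(2)}; consequently ρ_W^{(2)} is a DSO state. -/
/-!
Write `V₁₂ = V₂ ⊗ I` and `V₂₃ = I ⊗ V₂`; conjugating `V₁₂` by `V₂₃` gives the swap `V₁₃` of the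
first and third factors, so `R⁽²⁾ = ⅛ (1 - V₁₂) + ⅛ (1 - V₁₃)`. Each `V` is a Hermitian involution,
and for such an `A` we have `1 - A = ½ (1 - A)ᴴ (1 - A) ≥ 0`, whence `R⁽²⁾ ≥ 0`. The partial traces
are linear, with `tr₂ V₁₂ = tr₃ V₁₃ = I` and `tr₂ V₁₃ = tr₃ V₁₂ = d V`, which gives the Werner state
`(3/8) I - (1/4) V`. Finally `ρ_W = d⁻² ((1 - V) + d⁻¹ I)` is positive semidefinite of trace one.
-/

open Matrix
open scoped Kronecker ComplexOrder

namespace BellPaper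

variable {α β γ : Type*} [Fintype α] [Fintype β] [Fintype γ]

/-- Partial trace over the first factor of a threefold tensor product. -/
noncomputable def ptr1 (T : Matrix ((α × β) × γ) ((α × β) × γ) ℂ) :
    Matrix (β × γ) (β × γ) ℂ :=
  fun p q => ∑ i : α, T ((i, p.1), p.2) ((i, q.1), q.2)

/-- Partial trace over the second factor of a threefold tensor product. -/
noncomputable def ptr2 (T : Matrix ((α × β) × γ) ((α × β) × γ) ℂ) :
    Matrix (α × γ) (α × γ) ℂ :=
  fun p q => ∑ j : β, T ((p.1, j), p.2) ((q.1, j), q.2)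

/-- Partial trace over the third factor of a threefold tensor product. -/
noncomputable def ptr3 (T : Matrix ((α × β) × γ) ((α × β) × γ) ℂ) :
    Matrix (α × β) (α × β) ℂ :=
  fun p q => ∑ k : γ, T (p, k) (q, k)

/-- Partial trace over the second factor of a twofold tensor product. -/
noncomputable def ptrB (M : Matrix (α × β) (α × β) ℂ) : Matrix α α ℂ :=
  fun i i' => ∑ j : β, M (i, j) (i', j)

/-- A density matrix: positive semidefinite with unit trace. -/
def IsDensityMatrix {n : Type*} [Fintype n] (ρ : Matrix n n ℂ) : Prop :=
  ρ.PosSemidef ∧ ρ.trace = 1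

/-- Source-operator of type `T₁₂₂` for a state on ℂ^{d₁}⊗ℂ^{d₂}. -/
def IsSource122 {d₁ d₂ : ℕ} (ρ : Matrix (Fin d₁ × Fin d₂) (Fin d₁ × Fin d₂) ℂ)
    (T : Matrix ((Fin d₁ × Fin d₂) × Fin d₂) ((Fin d₁ × Fin d₂) × Fin d₂) ℂ) : Prop :=
  T.IsHermitian ∧ ptr2 T = ρ ∧ ptr3 T = ρ

/-- Source-operator of type `T₁₁₂` for a state on ℂ^{d₁}⊗ℂ^{d₂}. -/
def IsSource112 {d₁ d₂ : ℕ} (ρ : Matrix (Fin d₁ × Fin d₂) (Fin d₁ × Fin d₂) ℂ)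
    (S : Matrix ((Fin d₁ × Fin d₁) × Fin d₂) ((Fin d₁ × Fin d₁) × Fin d₂) ℂ) : Prop :=
  S.IsHermitian ∧ ptr1 S = ρ ∧ ptr2 S = ρ

/-- A DSO state: a density matrix admitting a positive semidefinite source-operator. -/
def IsDSO {d₁ d₂ : ℕ} (ρ : Matrix (Fin d₁ × Fin d₂) (Fin d₁ × Fin d₂) ℂ) : Prop :=
  IsDensityMatrix ρ ∧
    ((∃ T, T.PosSemidef ∧ IsSource122 ρ T) ∨ (∃ S, S.PosSemidef ∧ IsSource112 ρ S))

/-- A Bell class state: a density matrix admitting a density source-operator with the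
special dilation property (all three partial traces equal the state). -/
def IsBellClass {d : ℕ} (ρ : Matrix (Fin d × Fin d) (Fin d × Fin d) ℂ) : Prop :=
  IsDensityMatrix ρ ∧
    ∃ T : Matrix ((Fin d × Fin d) × Fin d) ((Fin d × Fin d) × Fin d) ℂ,
      T.PosSemidef ∧ ptr1 T = ρ ∧ ptr2 T = ρ ∧ ptr3 T = ρ

/-- The operator (spectral) norm of a matrix acting on a Euclidean space. -/
noncomputable def opNorm {n : Type*} [Fintype n] [DecidableEq n] (W : Matrix n n ℂ) : ℝ :=
  ‖Matrix.toEuclideanCLM (𝕜 := ℂ) W‖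

/-- The swap (permutation) operator `V_d` on ℂ^d ⊗ ℂ^d. -/
noncomputable def swapMat (d : ℕ) : Matrix (Fin d × Fin d) (Fin d × Fin d) ℂ :=
  fun p q => if p.1 = q.2 ∧ p.2 = q.1 then 1 else 0

/-- The Werner state on ℂ^d ⊗ ℂ^d. -/
noncomputable def werner (d : ℕ) : Matrix (Fin d × Fin d) (Fin d × Fin d) ℂ :=
  (((d : ℂ) + 1) / (d : ℂ) ^ 3) • (1 : Matrix (Fin d × Fin d) (Fin d × Fin d) ℂ)
    - ((d : ℂ) ^ 2)⁻¹ • swapMat d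

/-- The triple of indices of a point of the threefold product. -/
def triple {d : ℕ} (p : (Fin d × Fin d) × Fin d) : Fin 3 → Fin d := ![p.1.1, p.1.2, p.2]

/-- The unitary permuting the three tensor factors of ℂ^d ⊗ ℂ^d ⊗ ℂ^d according to π. -/
noncomputable def permMat (d : ℕ) (π : Equiv.Perm (Fin 3)) :
    Matrix ((Fin d × Fin d) × Fin d) ((Fin d × Fin d) × Fin d) ℂ :=
  fun p q => if ∀ i, triple p (π i) = triple q i then 1 else 0

/-- The antisymmetrization projection `Q_d^{(-)}` on ℂ^d ⊗ ℂ^d ⊗ ℂ^d. -/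
noncomputable def antisym (d : ℕ) :
    Matrix ((Fin d × Fin d) × Fin d) ((Fin d × Fin d) × Fin d) ℂ :=
  (6 : ℂ)⁻¹ • ∑ π : Equiv.Perm (Fin 3), (((Equiv.Perm.sign π : ℤ) : ℂ)) • permMat d π

/-- Tensor product of two vectors. -/
def tens {m n : Type*} (u : m → ℂ) (v : n → ℂ) : m × n → ℂ := fun p => u p.1 * v p.2

/-- The rank-one operator |v⟩⟨v|. -/
noncomputable def outer {n : Type*} (v : n → ℂ) : Matrix n n ℂ :=
  Matrix.vecMulVec v (star v)

section Involution

variable {n : Type*} [Fintype n] {A B : Matrix n n ℂ}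

theorem posSemidef_one_sub_of_mul_self_eq_one [DecidableEq n] (hA : A.IsHermitian)
    (hAA : A * A = 1) : (1 - A).PosSemidef := by
  have hsq : (1 - A)ᴴ * (1 - A) = (2 : ℂ) • (1 - A) := by
    rw [conjTranspose_sub, conjTranspose_one, hA.eq, sub_mul, mul_sub, mul_sub, hAA]
    simp only [one_mul, mul_one]
    module
  have h := (posSemidef_conjTranspose_mul_self (1 - A)).smul (a := (2⁻¹ : ℂ)) (by positivity)
  rwa [hsq, smul_smul, inv_mul_cancel₀ two_ne_zero, one_smul] at h

theorem isHermitian_mul_mul_self (hA : A.IsHermitian) (hB : B.IsHermitian) :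
    (A * B * A).IsHermitian := by
  simpa only [hA.eq] using isHermitian_conjTranspose_mul_mul A hB

theorem mul_mul_self_mul_self_eq_one [DecidableEq n] (hAA : A * A = 1) (hBB : B * B = 1) :
    A * B * A * (A * B * A) = 1 := by
  rw [← mul_assoc, ← mul_assoc, mul_assoc (A * B) A A, hAA, mul_one, mul_assoc A B B, hBB,
    mul_one, hAA]

end Involution

theorem swapMat_isHermitian (d : ℕ) : (swapMat d).IsHermitian := by
  ext p q
  simp only [conjTranspose_apply, swapMat, eq_comm (a := p.1), eq_comm (a := p.2), and_comm]
  split_ifs <;> simp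

theorem swapMat_mul_self (d : ℕ) : swapMat d * swapMat d = 1 := by
  ext p q
  simp [swapMat, mul_apply, one_apply, Fintype.sum_prod_type, Prod.ext_iff, ite_and]

theorem trace_swapMat (d : ℕ) : (swapMat d).trace = d := by
  simp [swapMat, trace, Fintype.sum_prod_type, ite_and]

theorem werner_eq (d : ℕ) :
    werner d = ((d : ℂ) ^ 2)⁻¹ • ((1 - swapMat d) + (d : ℂ)⁻¹ • 1) := by
  rcases eq_or_ne d 0 with rfl | hd
  · simp [werner]
  · have hcoeff : ((d : ℂ) + 1) / (d : ℂ) ^ 3 = ((d : ℂ) ^ 2)⁻¹ * (1 + (d : ℂ)⁻¹) := by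
      field_simp
    rw [werner, hcoeff]
    module

theorem posSemidef_werner (d : ℕ) : (werner d).PosSemidef := by
  rw [werner_eq]
  refine .smul (.add (posSemidef_one_sub_of_mul_self_eq_one (swapMat_isHermitian d)
    (swapMat_mul_self d)) (.smul .one ?_)) ?_ <;> positivity

theorem trace_werner {d : ℕ} (hd : d ≠ 0) : (werner d).trace = 1 := by
  have : (d : ℂ) ≠ 0 := by exact_mod_cast hd
  simp only [werner, trace_sub, trace_smul, trace_one, Fintype.card_prod, Fintype.card_fin,
    Nat.cast_mul, smul_eq_mul, trace_swapMat]
  field_simp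
  ring

theorem isDensityMatrix_werner {d : ℕ} (hd : d ≠ 0) : IsDensityMatrix (werner d) :=
  ⟨posSemidef_werner d, trace_werner hd⟩

noncomputable def swap12 (d : ℕ) : Matrix ((Fin d × Fin d) × Fin d) ((Fin d × Fin d) × Fin d) ℂ :=
  swapMat d ⊗ₖ (1 : Matrix (Fin d) (Fin d) ℂ)

noncomputable def swap23 (d : ℕ) : Matrix ((Fin d × Fin d) × Fin d) ((Fin d × Fin d) × Fin d) ℂ :=
  reindex (Equiv.prodAssoc (Fin d) (Fin d) (Fin d)).symm
    (Equiv.prodAssoc (Fin d) (Fin d) (Fin d)).symm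
    ((1 : Matrix (Fin d) (Fin d) ℂ) ⊗ₖ swapMat d)

noncomputable def swap13 (d : ℕ) : Matrix ((Fin d × Fin d) × Fin d) ((Fin d × Fin d) × Fin d) ℂ :=
  fun p q => if p.1.1 = q.2 ∧ p.1.2 = q.1.2 ∧ p.2 = q.1.1 then 1 else 0

theorem swap12_apply {d : ℕ} (a b c a' b' c' : Fin d) :
    swap12 d ((a, b), c) ((a', b'), c') = if a = b' ∧ b = a' ∧ c = c' then 1 else 0 := by
  rw [swap12, kronecker_apply, swapMat, one_apply, ite_zero_mul_ite_zero, mul_one]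
  simp only [and_assoc]

theorem swap23_apply {d : ℕ} (a b c a' b' c' : Fin d) :
    swap23 d ((a, b), c) ((a', b'), c') = if a = a' ∧ b = c' ∧ c = b' then 1 else 0 := by
  rw [swap23, reindex_apply, submatrix_apply]
  simp only [Equiv.symm_symm, Equiv.prodAssoc_apply]
  rw [kronecker_apply, swapMat, one_apply, ite_zero_mul_ite_zero, one_mul]

theorem swap23_mul_swap12_mul_swap23 (d : ℕ) : swap23 d * swap12 d * swap23 d = swap13 d := by
  ext ⟨⟨a, b⟩, c⟩ ⟨⟨a', b'⟩, c'⟩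
  simp only [mul_apply, Fintype.sum_prod_type, swap23_apply, swap12_apply, swap13, ite_and, ite_mul,
    mul_ite, one_mul, mul_one, zero_mul, mul_zero, Finset.sum_ite_irrel, Finset.sum_ite_eq,
    Finset.sum_ite_eq', Finset.mem_univ, if_true, Finset.sum_const_zero]
  grind

theorem swap12_isHermitian (d : ℕ) : (swap12 d).IsHermitian := by
  rw [IsHermitian, swap12, conjTranspose_kronecker, (swapMat_isHermitian d).eq, conjTranspose_one]

theorem swap12_mul_self (d : ℕ) : swap12 d * swap12 d = 1 := by
  rw [swap12, ← mul_kronecker_mul, swapMat_mul_self, one_mul, one_kronecker_one]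

theorem swap23_isHermitian (d : ℕ) : (swap23 d).IsHermitian := by
  refine IsHermitian.reindex ?_ _
  rw [IsHermitian, conjTranspose_kronecker, (swapMat_isHermitian d).eq, conjTranspose_one]

theorem swap23_mul_self (d : ℕ) : swap23 d * swap23 d = 1 := by
  rw [swap23, reindex_apply, submatrix_mul_equiv, ← mul_kronecker_mul, swapMat_mul_self, one_mul,
    one_kronecker_one, submatrix_one_equiv]

theorem swap13_isHermitian (d : ℕ) : (swap13 d).IsHermitian := by
  rw [← swap23_mul_swap12_mul_swap23]
  exact isHermitian_mul_mul_self (swap23_isHermitian d) (swap12_isHermitian d)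

theorem swap13_mul_self (d : ℕ) : swap13 d * swap13 d = 1 := by
  rw [← swap23_mul_swap12_mul_swap23]
  exact mul_mul_self_mul_self_eq_one (swap23_mul_self d) (swap12_mul_self d)

section PartialTrace

variable {α β γ : Type*} (T U : Matrix ((α × β) × γ) ((α × β) × γ) ℂ) (c : ℂ)

theorem ptr2_sub [Fintype β] : ptr2 (T - U) = ptr2 T - ptr2 U := by
  ext; simp [ptr2, Finset.sum_sub_distrib]

theorem ptr3_sub [Fintype γ] : ptr3 (T - U) = ptr3 T - ptr3 U := by
  ext; simp [ptr3, Finset.sum_sub_distrib]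

theorem ptr2_smul [Fintype β] : ptr2 (c • T) = c • ptr2 T := by
  ext; simp [ptr2, Finset.mul_sum]

theorem ptr3_smul [Fintype γ] : ptr3 (c • T) = c • ptr3 T := by
  ext; simp [ptr3, Finset.mul_sum]

theorem ptr2_one [Fintype β] [DecidableEq α] [DecidableEq β] [DecidableEq γ] :
    ptr2 (1 : Matrix ((α × β) × γ) ((α × β) × γ) ℂ) = (Fintype.card β : ℂ) • 1 := by
  ext; simp [ptr2, one_apply, Prod.ext_iff]

theorem ptr3_one [Fintype γ] [DecidableEq α] [DecidableEq β] [DecidableEq γ] :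
    ptr3 (1 : Matrix ((α × β) × γ) ((α × β) × γ) ℂ) = (Fintype.card γ : ℂ) • 1 := by
  ext; simp [ptr3, one_apply, Prod.ext_iff]

theorem ptr3_kronecker [Fintype γ] (A : Matrix (α × β) (α × β) ℂ) (B : Matrix γ γ ℂ) :
    ptr3 (A ⊗ₖ B) = B.trace • A := by
  ext; simp [ptr3, trace, ← Finset.mul_sum, mul_comm]

end PartialTrace

theorem ptr2_swap12 (d : ℕ) : ptr2 (swap12 d) = 1 := by
  ext ⟨a, c⟩ ⟨a', c'⟩
  simp [ptr2, swap12_apply, one_apply, ite_and]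

theorem ptr2_swap13 (d : ℕ) : ptr2 (swap13 d) = (d : ℂ) • swapMat d := by
  ext p q
  simp [ptr2, swap13, swapMat, ite_and]

theorem ptr3_swap13 (d : ℕ) : ptr3 (swap13 d) = 1 := by
  ext p q
  simp only [ptr3, swap13, ite_and, Finset.sum_ite_eq, Finset.mem_univ, if_true, one_apply,
    Prod.ext_iff]
  grind

/-- `R^{(2)}` is a density source-operator of type `T₁₂₂` for the Werner state
on ℂ²⊗ℂ², hence `ρ_W^{(2)}` is a DSO state. -/
theorem werner_two_isDSO
    (VI IV R : Matrix ((Fin 2 × Fin 2) × Fin 2) ((Fin 2 × Fin 2) × Fin 2) ℂ)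
    (hVI : VI = swapMat 2 ⊗ₖ (1 : Matrix (Fin 2) (Fin 2) ℂ))
    (hIV : IV = Matrix.reindex (Equiv.prodAssoc (Fin 2) (Fin 2) (Fin 2)).symm
        (Equiv.prodAssoc (Fin 2) (Fin 2) (Fin 2)).symm
        ((1 : Matrix (Fin 2) (Fin 2) ℂ) ⊗ₖ swapMat 2))
    (hR : R = (4 : ℂ)⁻¹ • (1 : Matrix ((Fin 2 × Fin 2) × Fin 2) ((Fin 2 × Fin 2) × Fin 2) ℂ)
        - (8 : ℂ)⁻¹ • VI - (8 : ℂ)⁻¹ • (IV * VI * IV)) :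
    R.PosSemidef ∧ ptr2 R = werner 2 ∧ ptr3 R = werner 2 ∧ IsDSO (werner 2) := by
  replace hR : R = (4 : ℂ)⁻¹ • 1 - (8 : ℂ)⁻¹ • swap12 2 - (8 : ℂ)⁻¹ • swap13 2 := by
    rw [hR, show VI = swap12 2 from hVI, show IV = swap23 2 from hIV,
      swap23_mul_swap12_mul_swap23]
  have hpsd : R.PosSemidef := by
    have hsum : R = (8 : ℂ)⁻¹ • (1 - swap12 2) + (8 : ℂ)⁻¹ • (1 - swap13 2) := by
      rw [hR]; module
    rw [hsum]
    exact .add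
      (.smul (posSemidef_one_sub_of_mul_self_eq_one (swap12_isHermitian 2) (swap12_mul_self 2))
        (by positivity))
      (.smul (posSemidef_one_sub_of_mul_self_eq_one (swap13_isHermitian 2) (swap13_mul_self 2))
        (by positivity))
  have hptr2 : ptr2 R = werner 2 := by
    rw [hR, ptr2_sub, ptr2_sub, ptr2_smul, ptr2_smul, ptr2_smul, ptr2_one, ptr2_swap12,
      ptr2_swap13, werner]
    simp only [Fintype.card_fin, Nat.cast_ofNat]
    module
  have hptr3 : ptr3 R = werner 2 := by
    rw [hR, ptr3_sub, ptr3_sub, ptr3_smul, ptr3_smul, ptr3_smul, ptr3_one, swap12,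
      ptr3_kronecker, ptr3_swap13, werner]
    simp only [Fintype.card_fin, trace_one, Nat.cast_ofNat]
    module
  exact ⟨hpsd, hptr2, hptr3, isDensityMatrix_werner two_ne_zero,
    .inl ⟨R, hpsd, hpsd.isHermitian, hptr2, hptr3⟩⟩

end BellPaper
end

section
/- Every Bell class state ρ on ℂ^d⊗ℂ^d satisfies: |tr[ρ(W₁⊗W₂)]| ≤ (1/2)·(1 + tr[ρ(W₂⊗W₂)]) and |tr[ρ(W₁⊗W₂)]| ≤ (1/2)·(1 + tr[ρ(W₁⊗W₁)]), for all Hermitian matrices W₁, W₂ on ℂ^d with operator norms at most 1. -/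
/-!
If `W` is Hermitian with operator norm at most one then `1 + W` and `1 - W` are positive
semidefinite, so for such `a, b, c` the expectation in a positive `T` of
`(1 + a) ⊗ (1 + b) ⊗ (1 + c) + (1 - a) ⊗ (1 - b) ⊗ (1 - c) = 2 (1 + a⊗b⊗1 + a⊗1⊗c + 1⊗b⊗c)`
is nonnegative. When all three two-party marginals of `T` equal `ρ` this reads
`0 ≤ 1 + tr ρ(a ⊗ b) + tr ρ(a ⊗ c) + tr ρ(b ⊗ c)`, and the choices `(a, b, c) = (∓W₁, W₂, W₂)`
and `(W₁, W₁, ∓W₂)` give the two bounds, since `tr ρ(W₁ ⊗ W₂)` is real.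
-/

open Matrix
open scoped Kronecker ComplexOrder

namespace BellPaper

variable {α β γ : Type*} [Fintype α] [Fintype β] [Fintype γ]

open scoped MatrixOrder

lemma trace_mul_nonneg_of_posSemidef {n : Type*} [Fintype n] {A B : Matrix n n ℂ}
    (hA : A.PosSemidef) (hB : B.PosSemidef) : 0 ≤ (A * B).trace := by
  classical
  obtain ⟨C, rfl⟩ := CStarAlgebra.nonneg_iff_eq_star_mul_self.mp hB.nonneg
  rw [← Matrix.mul_assoc, trace_mul_comm, ← Matrix.mul_assoc]
  exact (hA.mul_mul_conjTranspose_same C).trace_nonneg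

lemma im_trace_mul_eq_zero_of_isHermitian {n : Type*} [Fintype n] {A B : Matrix n n ℂ}
    (hA : A.IsHermitian) (hB : B.IsHermitian) : (A * B).trace.im = 0 := by
  refine Complex.conj_eq_iff_im.mp ?_
  rw [starRingEnd_apply, ← trace_conjTranspose, conjTranspose_mul, hA.eq, hB.eq, trace_mul_comm]

lemma _root_.Matrix.IsHermitian.kronecker {m n : Type*} {A : Matrix m m ℂ} {B : Matrix n n ℂ}
    (hA : A.IsHermitian) (hB : B.IsHermitian) : (A ⊗ₖ B).IsHermitian := by
  rw [IsHermitian, conjTranspose_kronecker, hA.eq, hB.eq]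

open scoped Matrix.Norms.L2Operator in
lemma mem_Icc_neg_one_one_of_opNorm_le_one {n : Type*} [Fintype n] [DecidableEq n]
    {W : Matrix n n ℂ} (hW : W.IsHermitian) (hn : opNorm W ≤ 1) : W ∈ Set.Icc (-1) 1 := by
  have h : algebraMap ℝ (Matrix n n ℂ) ‖W‖ ≤ 1 :=
    (algebraMap_mono (Matrix n n ℂ) hn).trans_eq (map_one _)
  exact ⟨(neg_le_neg h).trans hW.isSelfAdjoint.neg_algebraMap_norm_le_self,
    hW.isSelfAdjoint.le_algebraMap_norm_self.trans h⟩

section PartialTrace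

variable (T : Matrix ((α × β) × γ) ((α × β) × γ) ℂ)

lemma trace_ptr1_mul [DecidableEq α] (Y : Matrix β β ℂ) (Z : Matrix γ γ ℂ) :
    (ptr1 T * (Y ⊗ₖ Z)).trace = (T * ((1 ⊗ₖ Y) ⊗ₖ Z)).trace := by
  simp [trace, mul_apply, ptr1, Fintype.sum_prod_type, one_apply, Finset.sum_mul,
    Finset.sum_comm (α := α)]

lemma trace_ptr2_mul [DecidableEq β] (X : Matrix α α ℂ) (Z : Matrix γ γ ℂ) :
    (ptr2 T * (X ⊗ₖ Z)).trace = (T * ((X ⊗ₖ 1) ⊗ₖ Z)).trace := by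
  simp [trace, mul_apply, ptr2, Fintype.sum_prod_type, one_apply, Finset.sum_mul,
    Finset.sum_comm (α := β)]

lemma trace_ptr3_mul [DecidableEq γ] (X : Matrix α α ℂ) (Y : Matrix β β ℂ) :
    (ptr3 T * (X ⊗ₖ Y)).trace = (T * ((X ⊗ₖ Y) ⊗ₖ 1)).trace := by
  simp [trace, mul_apply, ptr3, Fintype.sum_prod_type, one_apply, Finset.sum_mul,
    Finset.sum_comm (α := γ)]

end PartialTrace

theorem zero_le_trace_mul_one_add_pairs {T : Matrix ((α × β) × γ) ((α × β) × γ) ℂ}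
    (hT : T.PosSemidef) [DecidableEq α] [DecidableEq β] [DecidableEq γ]
    {a : Matrix α α ℂ} {b : Matrix β β ℂ} {c : Matrix γ γ ℂ}
    (ha : a ∈ Set.Icc (-1) 1) (hb : b ∈ Set.Icc (-1) 1) (hc : c ∈ Set.Icc (-1) 1) :
    0 ≤ (T * ((1 ⊗ₖ 1) ⊗ₖ 1 + (a ⊗ₖ b) ⊗ₖ 1 + (a ⊗ₖ 1) ⊗ₖ c + (1 ⊗ₖ b) ⊗ₖ c)).trace := by
  have expand : ((a + 1) ⊗ₖ (b + 1)) ⊗ₖ (c + 1) + ((1 - a) ⊗ₖ (1 - b)) ⊗ₖ (1 - c)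
      = (2 : ℂ) • ((1 ⊗ₖ 1) ⊗ₖ 1 + (a ⊗ₖ b) ⊗ₖ 1 + (a ⊗ₖ 1) ⊗ₖ c + (1 ⊗ₖ b) ⊗ₖ c) := by
    ext ⟨⟨i, j⟩, k⟩ ⟨⟨i', j'⟩, k'⟩
    simp only [Matrix.add_apply, Matrix.sub_apply, Matrix.smul_apply, kroneckerMap_apply,
      smul_eq_mul]
    ring
  have plus := ((le_iff.mp ha.1).kronecker (le_iff.mp hb.1)).kronecker (le_iff.mp hc.1)
  have minus := ((le_iff.mp ha.2).kronecker (le_iff.mp hb.2)).kronecker (le_iff.mp hc.2)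
  simp only [sub_neg_eq_add] at plus
  have h := trace_mul_nonneg_of_posSemidef hT (plus.add minus)
  rw [expand, Matrix.mul_smul, trace_smul, smul_eq_mul] at h
  simpa using mul_nonneg (inv_nonneg.mpr zero_le_two : (0 : ℂ) ≤ 2⁻¹) h

theorem IsBellClass.zero_le_one_add_trace_mul_kronecker {d : ℕ}
    {ρ : Matrix (Fin d × Fin d) (Fin d × Fin d) ℂ} (hρ : IsBellClass ρ)
    {a b c : Matrix (Fin d) (Fin d) ℂ}
    (ha : a ∈ Set.Icc (-1) 1) (hb : b ∈ Set.Icc (-1) 1) (hc : c ∈ Set.Icc (-1) 1) :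
    0 ≤ 1 + (ρ * (a ⊗ₖ b)).trace + (ρ * (a ⊗ₖ c)).trace + (ρ * (b ⊗ₖ c)).trace := by
  obtain ⟨⟨-, hρ₁⟩, T, hT, h₁, h₂, h₃⟩ := hρ
  have h := zero_le_trace_mul_one_add_pairs hT ha hb hc
  rwa [Matrix.mul_add, Matrix.mul_add, Matrix.mul_add, trace_add, trace_add, trace_add,
    ← trace_ptr3_mul, ← trace_ptr3_mul, ← trace_ptr2_mul, ← trace_ptr1_mul, h₁, h₂, h₃,
    one_kronecker_one, Matrix.mul_one, hρ₁] at h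

/-- the inequalities (34) for a Bell class state. -/
theorem bell_class_single_product_bounds {d : ℕ}
    (ρ : Matrix (Fin d × Fin d) (Fin d × Fin d) ℂ) (hρ : IsBellClass ρ)
    (W₁ W₂ : Matrix (Fin d) (Fin d) ℂ)
    (hW₁ : W₁.IsHermitian) (hW₂ : W₂.IsHermitian)
    (hn₁ : opNorm W₁ ≤ 1) (hn₂ : opNorm W₂ ≤ 1) :
    ‖(ρ * (W₁ ⊗ₖ W₂)).trace‖
      ≤ (1 / 2) * (1 + ((ρ * (W₂ ⊗ₖ W₂)).trace).re)
    ∧ ‖(ρ * (W₁ ⊗ₖ W₂)).trace‖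
      ≤ (1 / 2) * (1 + ((ρ * (W₁ ⊗ₖ W₁)).trace).re) := by
  have h₁ := mem_Icc_neg_one_one_of_opNorm_le_one hW₁ hn₁
  have h₂ := mem_Icc_neg_one_one_of_opNorm_le_one hW₂ hn₂
  have h₁' : -W₁ ∈ Set.Icc (-1) 1 := Set.neg_mem_Icc_iff.mpr (by rwa [neg_neg])
  have h₂' : -W₂ ∈ Set.Icc (-1) 1 := Set.neg_mem_Icc_iff.mpr (by rwa [neg_neg])
  have e₁ := hρ.zero_le_one_add_trace_mul_kronecker h₁' h₂ h₂
  have e₂ := hρ.zero_le_one_add_trace_mul_kronecker h₁ h₂ h₂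
  have e₃ := hρ.zero_le_one_add_trace_mul_kronecker h₁ h₁ h₂'
  have e₄ := hρ.zero_le_one_add_trace_mul_kronecker h₁ h₁ h₂
  have hreal : ‖(ρ * (W₁ ⊗ₖ W₂)).trace‖ = |(ρ * (W₁ ⊗ₖ W₂)).trace.re| :=
    (Complex.abs_re_eq_norm.mpr (im_trace_mul_eq_zero_of_isHermitian hρ.1.1.isHermitian
      (hW₁.kronecker hW₂))).symm
  simp only [← neg_one_smul ℂ W₁, ← neg_one_smul ℂ W₂, smul_kronecker, kronecker_smul,
    Matrix.mul_smul, trace_smul, smul_eq_mul, neg_one_mul, Complex.le_def, Complex.add_re,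
    Complex.neg_re, Complex.one_re, Complex.zero_re] at e₁ e₂ e₃ e₄
  rw [hreal, abs_le, abs_le]
  constructor <;> constructor <;> linarith [e₁.1, e₂.1, e₃.1, e₄.1]

end BellPaper
end
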